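/- arXiv:1307.1826 — 4 statements merged into one kernel-verified Lean document; each statement's English description precedes it below -/
import Mathlib

section
/- Let X be a real Banach space, f : X → ℝ ∪ {+∞} proper lower semicontinuous, U ⊆ X open convex, and x̄ ∈ U. If f(y + t(x̄ − y)) ≤ f(y) for every y ∈ U and t ∈ [0,1], then for every y ∈ U and every x* in the Clarke subdifferential ∂_C f(y), one has ⟨x*, x̄ − y⟩ ≤ 0. -/
open Filter Topology Set

variable {X : Type*} [NormedAddCommGroup X] [NormedSpace ℝ X]

/-- Lower Dini subderivative of `f` at `x` in direction `d`. -/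
noncomputable def diniSub (f : X → EReal) (x d : X) : EReal :=
  Filter.liminf (fun t : ℝ => (f (x + t • d) - f x) / (t : EReal)) (𝓝[>] 0)

/-- Clarke–Rockafellar upper subderivative `f↑(x; d)`. -/
noncomputable def crSub (f : X → EReal) (x d : X) : EReal :=
  ⨆ δ : {δ : ℝ // 0 < δ},
    Filter.limsup
      (fun p : ℝ × X =>
        ⨅ d' : {d' : X // ‖d' - d‖ ≤ δ.1},
          (f (p.2 + p.1 • (d' : X)) - f p.2) / (p.1 : EReal))
      ((𝓝[>] (0:ℝ)) ×ˢ (𝓝 x ⊓ Filter.comap f (𝓝 (f x))))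

/-- Clarke subdifferential. -/
def clarkeSub (f : X → EReal) (x : X) : Set (X →L[ℝ] ℝ) :=
  {xs | ∀ d, ((xs d : ℝ) : EReal) ≤ crSub f x d}

/-- Subdifferential of convex analysis. -/
def cxSub (f : X → EReal) (x : X) : Set (X →L[ℝ] ℝ) :=
  {xs | ∀ y, ((xs (y - x) : ℝ) : EReal) + f x ≤ f y}

/-- Monotone polar of a graph `T ⊆ X × X*`. -/
def MonoPolar (T : Set (X × (X →L[ℝ] ℝ))) : Set (X × (X →L[ℝ] ℝ)) :=
  {p | ∀ q ∈ T, 0 ≤ (q.2 - p.2) (q.1 - p.1)}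

/-- `ε`-enlargement of the Clarke subdifferential. -/
def epsEnl (f : X → EReal) (eps : ℝ) (x : X) : Set (X →L[ℝ] ℝ) :=
  {xs | ∃ xe : X, xs ∈ clarkeSub f xe ∧ ‖xe - x‖ ≤ eps ∧
    f xe - f x ≤ (eps : EReal) ∧ f x - f xe ≤ (eps : EReal) ∧ xs (xe - x) ≤ eps}

/-!
At base points `x` near `y`, the direction `xb - x` lies within any tolerance `δ` of `xb - y`, and
along it the difference quotients of `f` are `≤ 0` because `f` does not increase on segments
towards `xb`. So the infimum over perturbed directions in `f↑(y; xb - y)` is eventually `≤ 0`,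
giving `xs (xb - y) ≤ f↑(y; xb - y) ≤ 0` for every Clarke subgradient `xs` at `y`.
-/

lemma EReal.sub_div_nonpos {a b : EReal} (hab : a ≤ b) {t : ℝ} (ht : 0 ≤ t) :
    (a - b) / (t : EReal) ≤ 0 :=
  EReal.div_nonpos_of_nonpos_of_nonneg (EReal.sub_le_of_le_add' (by rwa [add_zero]))
    (EReal.coe_nonneg.mpr ht)

lemma crSub_sub_nonpos_of_eventually_le {f : X → EReal} {y xb : X}
    (hdesc : ∀ᶠ p : ℝ × X in 𝓝[>] 0 ×ˢ 𝓝 y, f (p.2 + p.1 • (xb - p.2)) ≤ f p.2) :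
    crSub f y (xb - y) ≤ 0 := by
  refine iSup_le fun ⟨δ, hδ⟩ => limsup_le_of_le (by isBoundedDefault) ?_
  have hnear : ∀ᶠ x in 𝓝 y ⊓ comap f (𝓝 (f y)), ‖(xb - x) - (xb - y)‖ ≤ δ := by
    refine Eventually.filter_mono inf_le_left ?_
    filter_upwards [Metric.closedBall_mem_nhds y hδ] with x hx
    rwa [sub_sub_sub_cancel_left, ← dist_eq_norm']
  have hdesc' : ∀ᶠ p : ℝ × X in 𝓝[>] 0 ×ˢ (𝓝 y ⊓ comap f (𝓝 (f y))),
      f (p.2 + p.1 • (xb - p.2)) ≤ f p.2 :=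
    hdesc.filter_mono (prod_mono le_rfl inf_le_left)
  have hpos : ∀ᶠ t : ℝ in 𝓝[>] 0, 0 < t := self_mem_nhdsWithin
  filter_upwards [hdesc', hpos.prod_inl _, hnear.prod_inr _]
    with ⟨t, x⟩ hle (ht : 0 < t) hx
  exact (iInf_le _ ⟨xb - x, hx⟩).trans (EReal.sub_div_nonpos hle ht.le)

lemma apply_nonpos_of_mem_clarkeSub {f : X → EReal} {y d : X} {xs : X →L[ℝ] ℝ}
    (hxs : xs ∈ clarkeSub f y) (hd : crSub f y d ≤ 0) : xs d ≤ 0 :=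
  EReal.coe_nonpos.mp ((hxs d).trans hd)

theorem increasing_imp_clarke_minty_general
    (f : X → EReal)
    (U : Set X) (hUo : IsOpen U)
    (xb : X)
    (h : ∀ y ∈ U, ∀ t ∈ Set.Icc (0:ℝ) 1, f (y + t • (xb - y)) ≤ f y) :
    ∀ y ∈ U, ∀ xs ∈ clarkeSub f y, xs (xb - y) ≤ 0 := by
  intro y hy xs hxs
  refine apply_nonpos_of_mem_clarkeSub hxs (crSub_sub_nonpos_of_eventually_le ?_)
  have ht : ∀ᶠ t : ℝ in 𝓝[>] 0, t ∈ Icc (0 : ℝ) 1 :=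
    Icc_mem_nhdsGT_of_mem ⟨le_rfl, zero_lt_one⟩
  filter_upwards [ht.prod_inl _, Eventually.prod_inr (hUo.mem_nhds hy) _] with p htp hxp
  exact h p.2 hxp p.1 htp

theorem increasing_imp_clarke_minty [CompleteSpace X]
    (f : X → EReal) (hlsc : LowerSemicontinuous f)
    (hbot : ∀ z, f z ≠ ⊥) (hproper : ∃ z, f z ≠ ⊤)
    (U : Set X) (hUo : IsOpen U) (hUc : Convex ℝ U)
    (xb : X) (hxb : xb ∈ U)
    (h : ∀ y ∈ U, ∀ t ∈ Set.Icc (0:ℝ) 1, f (y + t • (xb - y)) ≤ f y) :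
    ∀ y ∈ U, ∀ xs ∈ clarkeSub f y, xs (xb - y) ≤ 0 :=
  increasing_imp_clarke_minty_general f U hUo xb h
end

section
/- Let X be a real Banach space and f : X → ℝ ∪ {+∞} proper lower semicontinuous convex. Then for every x ∈ X, (∂_cx f)⁰(x) = {x* ∈ X* : the function y ↦ f(y) − ⟨x*, y⟩ satisfies (f − x*)(y + t(x − y)) ≤ (f − x*)(y) for all y ∈ X, t ∈ [0,1]}. -/
open Filter Topology Set

variable {X : Type*} [NormedAddCommGroup X] [NormedSpace ℝ X]

/-!
Taking `t = 1` on the right-hand side says that `x` minimizes `f - x*`, i.e. `x* ∈ ∂f(x)`, and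
conversely convexity makes `f - x*` decrease along every segment towards a minimizer. So both
sides are `∂f(x)`, and the theorem is Rockafellar's maximal monotonicity of `∂f`.

Let `(x, x*)` be monotonically related to `∂f` and `c, ε > 0`. A continuous affine minorant of `f`
(Hahn–Banach against the closed convex epigraph) makes `f - x* + c‖· - x‖²` bounded below, and
Ekeland's principle gives `w`, no worse than a given `v`, minimizing
`f - x* + c‖· - x‖² + ε‖· - w‖`. Separating the epigraph of `f` from the strict hypograph of the
continuous convex part splits this minimum: some `φ ∈ ∂f(w)` has `-φ` as a subgradient of
`c‖· - x‖² - x* + ε‖· - w‖` at `w`. Monotonicity against `(w, φ)` forces `c‖w - x‖ ≤ ε`, and lower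
semicontinuity at `x`, as `ε` and `c` tend to `0`, gives `f(x) - x*(x) ≤ f(v) - x*(v)`.
-/

lemma LowerSemicontinuous.add_coe {α : Type*} [TopologicalSpace α] {f : α → EReal} {g : α → ℝ}
    (hf : LowerSemicontinuous f) (hg : Continuous g) :
    LowerSemicontinuous fun u => f u + (g u : EReal) :=
  hf.add' (continuous_coe_real_ereal.comp hg).lowerSemicontinuous fun _ =>
    EReal.continuousAt_add (Or.inr (EReal.coe_ne_bot _)) (Or.inr (EReal.coe_ne_top _))

lemma lowerSemicontinuous_of_coe_ereal {α : Type*} [TopologicalSpace α] {g : α → ℝ}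
    (hg : LowerSemicontinuous fun u => (g u : EReal)) : LowerSemicontinuous g := fun x y hy =>
  (hg x y (EReal.coe_lt_coe_iff.2 hy)).mono fun _ => EReal.coe_lt_coe_iff.1

lemma LowerSemicontinuous.le_of_forall_exists_dist_lt {α : Type*} [PseudoMetricSpace α]
    {F : α → EReal} (hF : LowerSemicontinuous F) {x : α} {K : ℝ}
    (h : ∀ δ > 0, ∃ w, dist w x < δ ∧ F w ≤ ((K + δ : ℝ) : EReal)) : F x ≤ K := by
  refine EReal.le_of_forall_lt_iff_le.1 fun z hz => not_lt.1 fun hzx => ?_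
  have hKz : K < z := EReal.coe_lt_coe_iff.1 hz
  obtain ⟨ρ, hρ, hball⟩ := Metric.eventually_nhds_iff.1 (hF x z hzx)
  obtain ⟨w, hw, hFw⟩ := h (min ρ (z - K)) (lt_min hρ (by linarith))
  have hwz : F w ≤ z := hFw.trans (EReal.coe_le_coe_iff.2 (by linarith [min_le_right ρ (z - K)]))
  exact (hball (hw.trans_le (min_le_left _ _))).not_ge hwz

def epigraph {α : Type*} (f : α → EReal) : Set (α × ℝ) := {p | f p.1 ≤ p.2}

lemma isClosed_epigraph {α : Type*} [TopologicalSpace α] {f : α → EReal}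
    (hf : LowerSemicontinuous f) : IsClosed (epigraph f) :=
  hf.isClosed_epigraph.preimage
    (continuous_fst.prodMk (continuous_coe_real_ereal.comp continuous_snd))

lemma convex_epigraph {f : X → EReal}
    (hconv : ∀ x y : X, ∀ a b : ℝ, 0 ≤ a → 0 ≤ b → a + b = 1 →
      f (a • x + b • y) ≤ (a : EReal) * f x + (b : EReal) * f y) :
    Convex ℝ (epigraph f) := by
  rintro ⟨p, r⟩ (hp : f p ≤ r) ⟨q, s⟩ (hq : f q ≤ s) a b ha hb hab
  calc f (a • p + b • q) ≤ (a : EReal) * f p + (b : EReal) * f q := hconv p q a b ha hb hab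
    _ ≤ (a : EReal) * r + (b : EReal) * s :=
      add_le_add (mul_le_mul_of_nonneg_left hp (by exact_mod_cast ha))
        (mul_le_mul_of_nonneg_left hq (by exact_mod_cast hb))
    _ = ((a * r + b * s : ℝ) : EReal) := by norm_cast

lemma ContinuousLinearMap.apply_mk_eq_add_mul (L : X × ℝ →L[ℝ] ℝ) (u : X) (r : ℝ) :
    L (u, r) = L (u, 0) + r * L (0, 1) := by
  rw [← smul_eq_mul, ← map_smul, ← map_add]
  simp

lemma ContinuousLinearMap.apply_zero_one_pos_of_lt {L : X × ℝ →L[ℝ] ℝ} {u : X} {r s : ℝ}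
    (h : L (u, r) < L (u, s)) (hrs : r ≤ s) : 0 < L (0, 1) := by
  rw [L.apply_mk_eq_add_mul u r, L.apply_mk_eq_add_mul u s] at h
  nlinarith

lemma ContinuousLinearMap.exists_le_apply_iff (L : X × ℝ →L[ℝ] ℝ) (hL : 0 < L (0, 1)) (c : ℝ) :
    ∃ (φ : X →L[ℝ] ℝ) (β : ℝ), ∀ u r, c ≤ L (u, r) ↔ φ u + β ≤ r := by
  refine ⟨-(L (0, 1))⁻¹ • L.comp (.inl ℝ X ℝ), c / L (0, 1), fun u r => ?_⟩
  have hdiv : (L (0, 1))⁻¹ * L (u, 0) + r = (L (u, 0) + r * L (0, 1)) / L (0, 1) := by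
    field_simp
  simp only [smul_apply, comp_apply, inl_apply, smul_eq_mul, neg_mul, neg_add_le_iff_le_add]
  rw [hdiv, div_le_div_iff_of_pos_right hL, ← L.apply_mk_eq_add_mul]

lemma exists_affine_le {f : X → EReal} (hlsc : LowerSemicontinuous f)
    (hepi : Convex ℝ (epigraph f)) {v : X} {b : ℝ} (hv : f v = b) :
    ∃ (φ : X →L[ℝ] ℝ) (β : ℝ), ∀ u, ((φ u + β : ℝ) : EReal) ≤ f u := by
  have hout : (v, b - 1) ∉ epigraph f := by
    show ¬ f v ≤ ((b - 1 : ℝ) : EReal)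
    rw [hv, EReal.coe_le_coe_iff]
    linarith
  have hin : (v, b) ∈ epigraph f := by simp [epigraph, hv]
  obtain ⟨L, c, hLout, hLin⟩ := geometric_hahn_banach_point_closed hepi
    (isClosed_epigraph hlsc) hout
  obtain ⟨φ, β, hφ⟩ := L.exists_le_apply_iff
    (L.apply_zero_one_pos_of_lt (hLout.trans (hLin _ hin)) (by linarith)) c
  refine ⟨φ, β, fun u => EReal.le_of_forall_lt_iff_le.1 fun r hr => ?_⟩
  exact EReal.coe_le_coe_iff.2 ((hφ u r).1 (hLin (u, r) hr.le).le)

lemma exists_mem_cxSub_of_forall_add_le {f : X → EReal} (hepi : Convex ℝ (epigraph f))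
    {g : X → ℝ} (hg : ConvexOn ℝ univ g) (hgc : Continuous g) {w : X} {a : ℝ} (hw : f w = a)
    (hmin : ∀ u, f w + g w ≤ f u + g u) :
    ∃ φ ∈ cxSub f w, ∀ u, g w - g u ≤ φ (u - w) := by
  set O : Set (X × ℝ) := {p | p.2 < a + g w - g p.1}
  have hOconv : Convex ℝ O := by
    simpa [O] using ((concaveOn_const (a + g w) convex_univ).sub hg).convex_strict_hypograph
  have hOopen : IsOpen O :=
    isOpen_lt continuous_snd (continuous_const.sub (hgc.comp continuous_fst))
  have hdisj : Disjoint O (epigraph f) := by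
    refine Set.disjoint_left.2 ?_
    rintro ⟨u, r⟩ (hO : r < a + g w - g u) (hE : f u ≤ r)
    have : ((a + g w : ℝ) : EReal) ≤ ((r + g u : ℝ) : EReal) := calc
      ((a + g w : ℝ) : EReal) = f w + g w := by rw [hw, EReal.coe_add]
      _ ≤ f u + g u := hmin u
      _ ≤ r + g u := add_le_add_left hE _
      _ = ((r + g u : ℝ) : EReal) := (EReal.coe_add _ _).symm
    linarith [EReal.coe_le_coe_iff.1 this]
  have hwE : (w, a) ∈ epigraph f := by simp [epigraph, hw]
  have hwO : (w, a - 1) ∈ O := by simp [O]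
  obtain ⟨L, c, hLO, hLE⟩ := geometric_hahn_banach_open hOconv hOopen hepi hdisj
  obtain ⟨φ, β, hφ⟩ := L.exists_le_apply_iff
    (L.apply_zero_one_pos_of_lt ((hLO _ hwO).trans_le (hLE _ hwE)) (by linarith)) c
  have hE : ∀ u (r : ℝ), f u ≤ r → φ u + β ≤ r := fun u r h => (hφ u r).1 (hLE (u, r) h)
  have hO : ∀ u, a + g w - g u ≤ φ u + β := fun u => le_of_forall_lt fun (r : ℝ) hr =>
    not_le.1 fun h => (hLO (u, r) hr).not_ge ((hφ u r).2 h)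
  have hβ := hE w a hw.le
  have hβ' := hO w
  refine ⟨φ, fun u => ?_, fun u => ?_⟩
  · rw [hw, ← EReal.coe_add]
    refine EReal.le_of_forall_lt_iff_le.1 fun r hr => EReal.coe_le_coe_iff.2 ?_
    have := hE u r hr.le
    rw [map_sub]
    linarith
  · have := hO u
    rw [map_sub]
    linarith

lemma exists_le_add_of_bddBelow {ι : Type*} {h : ι → ℝ} {s : Set ι} (hs : s.Nonempty)
    (hh : BddBelow (h '' s)) {δ : ℝ} (hδ : 0 < δ) : ∃ v ∈ s, ∀ u ∈ s, h v ≤ h u + δ := by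
  obtain ⟨_, ⟨v, hv, rfl⟩, hlt⟩ :=
    exists_lt_of_csInf_lt (hs.image h) (lt_add_of_pos_right (sInf (h '' s)) hδ)
  exact ⟨v, hv, fun u hu => by linarith [csInf_le hh (mem_image_of_mem h hu)]⟩

section Ekeland

variable {α : Type*} [PseudoMetricSpace α] {h : α → ℝ} {ε : ℝ}

def ekelandSet (h : α → ℝ) (ε : ℝ) (v : α) : Set α := {u | h u + ε * dist u v ≤ h v}

lemma mem_ekelandSet_self (v : α) : v ∈ ekelandSet h ε v := by simp [ekelandSet]

lemma ekelandSet_subset (hε : 0 ≤ ε) {u v : α} (hu : u ∈ ekelandSet h ε v) :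
    ekelandSet h ε u ⊆ ekelandSet h ε v := fun z (hz : h z + ε * dist z u ≤ h u) => by
  have htri : ε * dist z v ≤ ε * dist z u + ε * dist u v := by
    rw [← mul_add]
    exact mul_le_mul_of_nonneg_left (dist_triangle z u v) hε
  show h z + ε * dist z v ≤ h v
  linarith [show h u + ε * dist u v ≤ h v from hu]

lemma isClosed_ekelandSet (hh : LowerSemicontinuous h) (v : α) : IsClosed (ekelandSet h ε v) :=
  (hh.add (continuous_const.mul (continuous_id.dist continuous_const)).lowerSemicontinuous
    ).isClosed_preimage (h v)

theorem LowerSemicontinuous.exists_le_add_mul_dist [CompleteSpace α] (hh : LowerSemicontinuous h)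
    (hbdd : BddBelow (range h)) (hε : 0 < ε) (x₀ : α) :
    ∃ w, h w ≤ h x₀ ∧ ∀ u, h w ≤ h u + ε * dist u w := by
  set S := ekelandSet h ε
  have step : ∀ (n : ℕ) (v : α), ∃ v' ∈ S v, ∀ u ∈ S v, h v' ≤ h u + (1 / 2) ^ n := fun n v =>
    exists_le_add_of_bddBelow ⟨v, mem_ekelandSet_self v⟩ (hbdd.mono (image_subset_range _ _))
      (by positivity)
  choose next hnext_mem hnext_le using step
  have hpow : Tendsto (fun n : ℕ => ((1 : ℝ) / 2) ^ n) atTop (𝓝 0) :=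
    tendsto_pow_atTop_nhds_zero_of_lt_one (by norm_num) (by norm_num)
  let x : ℕ → α := fun n => Nat.rec x₀ next n
  have hS_anti : Antitone fun n => S (x n) :=
    antitone_nat_of_succ_le fun n => ekelandSet_subset hε.le (hnext_mem n (x n))
  have hmem : ∀ n k, n ≤ k → x k ∈ S (x n) := fun n k hnk => hS_anti hnk (mem_ekelandSet_self _)
  have hsmall : ∀ n, ∀ u ∈ S (x (n + 1)), dist u (x (n + 1)) ≤ (1 / 2) ^ n / ε := by
    intro n u hu
    have h₁ := hnext_le n (x n) u (hS_anti n.le_succ hu)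
    have h₂ : h u + ε * dist u (x (n + 1)) ≤ h (x (n + 1)) := hu
    rw [le_div_iff₀ hε]
    linarith
  have hcauchy : CauchySeq fun n => x (n + 1) := by
    refine cauchySeq_of_le_tendsto_0' (fun n => (1 / 2) ^ n / ε) (fun n m hnm => ?_) ?_
    · rw [dist_comm]
      exact hsmall n _ (hmem (n + 1) (m + 1) (by omega))
    · simpa using hpow.div_const ε
  obtain ⟨w, hw⟩ := cauchySeq_tendsto_of_complete hcauchy
  have hwS : ∀ n, w ∈ S (x n) := fun n => (isClosed_ekelandSet hh _).mem_of_tendsto hw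
    (eventually_atTop.2 ⟨n, fun k hk => hmem n (k + 1) (by omega)⟩)
  refine ⟨w, ?_, fun u => ?_⟩
  · have : h w + ε * dist w x₀ ≤ h x₀ := hwS 0
    nlinarith [dist_nonneg (x := w) (y := x₀)]
  by_cases hu : u ∈ S w
  · have hle : ∀ n, h w ≤ h u + (1 / 2) ^ n := fun n => by
      have h₁ := hnext_le n (x n) u (ekelandSet_subset hε.le (hwS n) hu)
      have h₂ : h w + ε * dist w (x (n + 1)) ≤ h (x (n + 1)) := hwS (n + 1)
      nlinarith [dist_nonneg (x := w) (y := x (n + 1))]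
    have hlim : Tendsto (fun n : ℕ => h u + (1 / 2) ^ n) atTop (𝓝 (h u)) := by
      simpa using tendsto_const_nhds.add hpow
    have : h w ≤ h u := ge_of_tendsto' hlim hle
    nlinarith [dist_nonneg (x := u) (y := w)]
  · exact (not_le.1 hu).le

theorem LowerSemicontinuous.exists_le_add_mul_dist_ereal [CompleteSpace α] {h : α → EReal}
    (hh : LowerSemicontinuous h) {m : ℝ} (hm : ∀ u, (m : EReal) ≤ h u) (hε : 0 < ε) {x₀ : α}
    {b : ℝ} (hx₀ : h x₀ = b) : ∃ w, h w ≤ b ∧ ∀ u, h w ≤ h u + ((ε * dist u w : ℝ) : EReal) := by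
  set M : ℝ := b + 1
  -- truncation above `h x₀` makes `h` real-valued and does not affect the point found
  set h' : α → ℝ := fun u => (min (h u) M).toReal
  have hh' : ∀ u, (h' u : EReal) = min (h u) M := fun u =>
    EReal.coe_toReal ((min_le_right _ _).trans_lt (EReal.coe_lt_top M)).ne
      (lt_min ((EReal.bot_lt_coe m).trans_le (hm u)) (EReal.bot_lt_coe M)).ne'
  have hlsc' : LowerSemicontinuous h' := by
    refine lowerSemicontinuous_of_coe_ereal ?_
    simpa only [hh'] using hh.inf lowerSemicontinuous_const
  have hbdd : BddBelow (range h') := ⟨min m M, by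
    rintro _ ⟨u, rfl⟩
    refine EReal.coe_le_coe_iff.1 (hh' u ▸ le_min ?_ ?_)
    · exact (EReal.coe_le_coe_iff.2 (min_le_left m M)).trans (hm u)
    · exact EReal.coe_le_coe_iff.2 (min_le_right m M)⟩
  obtain ⟨w, hw₀, hw⟩ := hlsc'.exists_le_add_mul_dist hbdd hε x₀
  have hx₀' : h' x₀ = b := by
    have := hh' x₀
    rw [hx₀, min_eq_left (EReal.coe_le_coe_iff.2 (by linarith))] at this
    exact_mod_cast this
  have hwM : h w < M := by
    have : (h' w : EReal) < M := EReal.coe_lt_coe_iff.2 (by linarith)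
    rwa [hh', min_lt_iff, lt_self_iff_false, or_false] at this
  have hw' : h w = h' w := by rw [hh', min_eq_left hwM.le]
  refine ⟨w, ?_, fun u => ?_⟩
  · rw [hw']
    exact_mod_cast hx₀' ▸ hw₀
  · calc h w = ((h' w : ℝ) : EReal) := hw'
      _ ≤ ((h' u + ε * dist u w : ℝ) : EReal) := EReal.coe_le_coe_iff.2 (hw u)
      _ = (h' u : EReal) + ((ε * dist u w : ℝ) : EReal) := EReal.coe_add _ _
      _ ≤ h u + ((ε * dist u w : ℝ) : EReal) := by
        rw [hh']
        exact add_le_add_left (min_le_left _ _) _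

end Ekeland

lemma ContinuousLinearMap.exists_le_apply_add_mul_dist_sq (φ : X →L[ℝ] ℝ) {c : ℝ} (hc : 0 < c)
    (x : X) : ∃ m, ∀ u, m ≤ φ u + c * dist u x ^ 2 := by
  refine ⟨φ x - ‖φ‖ ^ 2 / (4 * c), fun u => ?_⟩
  have hφ : -(‖φ‖ * dist u x) ≤ φ (u - x) := by
    rw [dist_eq_norm]
    exact neg_le_of_abs_le (φ.le_opNorm (u - x))
  have hsq : 0 ≤ (2 * c * dist u x - ‖φ‖) ^ 2 / (4 * c) := by positivity
  have hexp : (2 * c * dist u x - ‖φ‖) ^ 2 / (4 * c)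
      = c * dist u x ^ 2 - ‖φ‖ * dist u x + ‖φ‖ ^ 2 / (4 * c) := by
    field_simp
    ring
  rw [map_sub] at hφ
  linarith

lemma mem_cxSub_iff {f : X → EReal} {x : X} {xs : X →L[ℝ] ℝ} :
    xs ∈ cxSub f x ↔ ∀ y, f x - xs x ≤ f y - xs y := by
  refine forall_congr' fun y => ?_
  rw [EReal.le_sub_iff_add_le (Or.inl (EReal.coe_ne_bot _)) (Or.inl (EReal.coe_ne_top _)), map_sub]
  induction f x using EReal.rec with
  | bot => simp
  | top => rw [EReal.coe_add_top, EReal.top_sub_coe, EReal.top_add_coe]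
  | coe a =>
    rw [← EReal.coe_sub, ← EReal.coe_add, ← EReal.coe_add]
    ring_nf

lemma ne_top_of_mem_cxSub {f : X → EReal} (hproper : ∃ z, f z ≠ ⊤) {y : X} {ys : X →L[ℝ] ℝ}
    (hys : ys ∈ cxSub f y) : f y ≠ ⊤ := fun htop => by
  obtain ⟨z, hz⟩ := hproper
  have := hys z
  rw [htop, EReal.coe_add_top] at this
  exact hz (top_le_iff.1 this)

lemma mem_monoPolar_of_mem_cxSub {f : X → EReal} (hbot : ∀ z, f z ≠ ⊥) (hproper : ∃ z, f z ≠ ⊤)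
    {x : X} {xs : X →L[ℝ] ℝ} (hxs : xs ∈ cxSub f x) :
    (x, xs) ∈ MonoPolar {p | p.2 ∈ cxSub f p.1} := by
  rintro ⟨y, ys⟩ (hys : ys ∈ cxSub f y)
  obtain ⟨a, ha⟩ : ∃ a : ℝ, f x = a :=
    ⟨_, (EReal.coe_toReal (ne_top_of_mem_cxSub hproper hxs) (hbot x)).symm⟩
  obtain ⟨b, hb⟩ : ∃ b : ℝ, f y = b :=
    ⟨_, (EReal.coe_toReal (ne_top_of_mem_cxSub hproper hys) (hbot y)).symm⟩
  have hx := hxs y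
  have hy := hys x
  rw [ha, hb, ← EReal.coe_add, EReal.coe_le_coe_iff] at hx hy
  simp only [sub_apply, map_sub] at hx hy ⊢
  linarith

lemma sub_le_of_mem_cxSub {f : X → EReal} (hbot : ∀ z, f z ≠ ⊥) (hepi : Convex ℝ (epigraph f))
    {x : X} {xs : X →L[ℝ] ℝ} (hxs : xs ∈ cxSub f x) (y : X) {t : ℝ} (ht : t ∈ Icc (0 : ℝ) 1) :
    f (y + t • (x - y)) - xs (y + t • (x - y)) ≤ f y - xs y := by
  rcases eq_or_ne (f y) ⊤ with htop | htop
  · rw [htop, EReal.top_sub_coe]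
    exact le_top
  obtain ⟨b, hb⟩ : ∃ b : ℝ, f y = b := ⟨_, (EReal.coe_toReal htop (hbot y)).symm⟩
  have hxy := mem_cxSub_iff.1 hxs y
  rw [hb] at hxy
  have hxtop : f x ≠ ⊤ := fun h => by
    rw [h, EReal.top_sub_coe, top_le_iff, ← EReal.coe_sub] at hxy
    exact EReal.coe_ne_top _ hxy
  obtain ⟨a, ha⟩ : ∃ a : ℝ, f x = a := ⟨_, (EReal.coe_toReal hxtop (hbot x)).symm⟩
  rw [ha, ← EReal.coe_sub, ← EReal.coe_sub, EReal.coe_le_coe_iff] at hxy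
  have hmem : (1 - t) • (y, b) + t • (x, a) ∈ epigraph f :=
    hepi (show f y ≤ b from hb.le) (show f x ≤ a from ha.le) (by linarith [ht.2]) ht.1 (by ring)
  have hz : y + t • (x - y) = (1 - t) • y + t • x := by module
  have hfz : f (y + t • (x - y)) ≤ (((1 - t) * b + t * a : ℝ) : EReal) := by
    simpa [epigraph, hz] using hmem
  refine (EReal.sub_le_sub hfz le_rfl).trans ?_
  rw [hb, ← EReal.coe_sub, ← EReal.coe_sub, EReal.coe_le_coe_iff, hz, map_add, map_smul, map_smul,
    smul_eq_mul, smul_eq_mul]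
  nlinarith [ht.1]

lemma exists_le_add_mul_dist_sq_sub {f : X → EReal} (hlsc : LowerSemicontinuous f)
    (hepi : Convex ℝ (epigraph f)) {v : X} {b : ℝ} (hv : f v = b) (xs : X →L[ℝ] ℝ) {c : ℝ}
    (hc : 0 < c) (x : X) :
    ∃ m : ℝ, ∀ u, (m : EReal) ≤ f u + ((c * dist u x ^ 2 - xs u : ℝ) : EReal) := by
  obtain ⟨l, β, hl⟩ := exists_affine_le hlsc hepi hv
  obtain ⟨m, hm⟩ := (l - xs).exists_le_apply_add_mul_dist_sq hc x
  refine ⟨m + β, fun u => ?_⟩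
  calc ((m + β : ℝ) : EReal) ≤ ((l u + β + (c * dist u x ^ 2 - xs u) : ℝ) : EReal) := by
        have := hm u
        rw [sub_apply] at this
        exact EReal.coe_le_coe_iff.2 (by linarith)
    _ = ((l u + β : ℝ) : EReal) + ((c * dist u x ^ 2 - xs u : ℝ) : EReal) := EReal.coe_add _ _
    _ ≤ f u + ((c * dist u x ^ 2 - xs u : ℝ) : EReal) := add_le_add_left (hl u) _

lemma exists_dist_le_of_mem_monoPolar [CompleteSpace X] {f : X → EReal}
    (hlsc : LowerSemicontinuous f) (hepi : Convex ℝ (epigraph f)) {x : X} {xs : X →L[ℝ] ℝ}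
    (hpolar : (x, xs) ∈ MonoPolar {p | p.2 ∈ cxSub f p.1}) {v : X} {b : ℝ} (hv : f v = b)
    {c ε : ℝ} (hc : 0 < c) (hε : 0 < ε) :
    ∃ w, c * dist w x ≤ ε ∧ f w - xs w ≤ ((b - xs v + c * dist v x ^ 2 : ℝ) : EReal) := by
  set q : X → ℝ := fun u => c * dist u x ^ 2 - xs u
  have hq : Continuous q := by fun_prop
  obtain ⟨m, hlow⟩ := exists_le_add_mul_dist_sq_sub hlsc hepi hv xs hc x
  obtain ⟨w, hwv, hwmin⟩ := (hlsc.add_coe hq).exists_le_add_mul_dist_ereal hlow hε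
    (x₀ := v) (b := b + q v) (by rw [hv, EReal.coe_add])
  obtain ⟨a, ha⟩ : ∃ a : ℝ, f w = a := by
    refine ⟨(f w).toReal, (EReal.coe_toReal (fun htop => ?_) (fun hbot => ?_)).symm⟩
    · rw [htop, EReal.top_add_coe, top_le_iff] at hwv
      exact EReal.coe_ne_top _ hwv
    · have := hlow w
      rw [hbot, EReal.bot_add, le_bot_iff] at this
      exact EReal.coe_ne_bot _ this
  set g : X → ℝ := fun u => q u + ε * dist u w
  have hg : ConvexOn ℝ univ g :=
    ((((convexOn_univ_dist x).pow (fun _ _ => dist_nonneg) 2).smul hc.le).sub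
      (xs.toLinearMap.concaveOn convex_univ)).add ((convexOn_univ_dist w).smul hε.le) |>.congr
      fun _ _ => rfl
  have hmin : ∀ u, f w + g w ≤ f u + g u := fun u => by
    simpa [g, add_assoc, EReal.coe_add] using hwmin u
  obtain ⟨φ, hφ, hφg⟩ := exists_mem_cxSub_of_forall_add_le hepi hg (by fun_prop) ha hmin
  have hmono : 0 ≤ (φ - xs) (w - x) := hpolar (w, φ) hφ
  have hφx := hφg x
  have hdist : c * dist w x ^ 2 ≤ ε * dist w x := by
    simp only [g, q, map_sub, sub_apply, dist_self, dist_comm x w] at hφx hmono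
    linarith
  refine ⟨w, ?_, ?_⟩
  · rcases (dist_nonneg : 0 ≤ dist w x).eq_or_lt with h0 | hpos
    · rw [← h0, mul_zero]
      exact hε.le
    · nlinarith
  · have : a + q w ≤ b + q v := by exact_mod_cast ha ▸ hwv
    rw [ha, ← EReal.coe_sub, EReal.coe_le_coe_iff]
    nlinarith [sq_nonneg (dist w x)]

theorem mem_cxSub_of_mem_monoPolar [CompleteSpace X] {f : X → EReal}
    (hlsc : LowerSemicontinuous f) (hbot : ∀ z, f z ≠ ⊥) (hepi : Convex ℝ (epigraph f))
    {x : X} {xs : X →L[ℝ] ℝ} (hpolar : (x, xs) ∈ MonoPolar {p | p.2 ∈ cxSub f p.1}) :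
    xs ∈ cxSub f x := by
  refine mem_cxSub_iff.2 fun v => ?_
  rcases eq_or_ne (f v) ⊤ with htop | htop
  · rw [htop, EReal.top_sub_coe]
    exact le_top
  obtain ⟨b, hb⟩ : ∃ b : ℝ, f v = b := ⟨_, (EReal.coe_toReal htop (hbot v)).symm⟩
  have hF : LowerSemicontinuous fun u => f u - xs u := by
    simpa [sub_eq_add_neg] using hlsc.add_coe (g := fun u => -xs u) (by fun_prop)
  rw [hb, ← EReal.coe_sub]
  refine hF.le_of_forall_exists_dist_lt fun δ hδ => ?_
  set c := δ / (dist v x ^ 2 + 1)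
  have hc : 0 < c := by positivity
  obtain ⟨w, hw, hfw⟩ := exists_dist_le_of_mem_monoPolar hlsc hepi hpolar hb hc
    (ε := c * (δ / 2)) (by positivity)
  refine ⟨w, by nlinarith, hfw.trans (EReal.coe_le_coe_iff.2 ?_)⟩
  have : c * dist v x ^ 2 ≤ δ := by
    rw [div_mul_eq_mul_div, div_le_iff₀ (by positivity)]
    nlinarith
  linarith

theorem polar_cxSub_eq_increasing [CompleteSpace X]
    (f : X → EReal) (hlsc : LowerSemicontinuous f)
    (hbot : ∀ z, f z ≠ ⊥) (hproper : ∃ z, f z ≠ ⊤)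
    (hconv : ∀ x y : X, ∀ a b : ℝ, 0 ≤ a → 0 ≤ b → a + b = 1 →
      f (a • x + b • y) ≤ (a : EReal) * f x + (b : EReal) * f y)
    (x : X) :
    {xs : X →L[ℝ] ℝ | (x, xs) ∈ MonoPolar {p | p.2 ∈ cxSub f p.1}} =
      {xs : X →L[ℝ] ℝ | ∀ y : X, ∀ t ∈ Set.Icc (0:ℝ) 1,
        f (y + t • (x - y)) - ((xs (y + t • (x - y)) : ℝ) : EReal) ≤
          f y - ((xs y : ℝ) : EReal)} := by
  have hepi := convex_epigraph hconv
  ext xs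
  refine ⟨fun hpolar y t ht =>
    sub_le_of_mem_cxSub hbot hepi (mem_cxSub_of_mem_monoPolar hlsc hbot hepi hpolar) y ht,
    fun hray => mem_monoPolar_of_mem_cxSub hbot hproper (mem_cxSub_iff.2 fun y => ?_)⟩
  simpa using hray y 1 ⟨zero_le_one, le_rfl⟩
end

section
/- Let X be a real Banach space and f : X → ℝ ∪ {+∞} proper lower semicontinuous. Assume the Subderivative/Subdifferential Inequality holds for the Clarke subdifferential: for every x̄ ∈ dom f, every ε > 0, the set ∂̆_ε f(x̄) is nonempty and f′(x̄; d) ≤ inf_{ε>0} sup⟨∂̆_ε f(x̄), d⟩ for all d ∈ X. Then the Clarke subdifferential ∂_C f is monotone absorbing: (∂_C f)⁰ ⊆ ∂_C f, i.e., every pair (x, x*) monotonically related to the graph of ∂_C f belongs to the graph of ∂_C f. -/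
/-!
Let `(x, x*)` be monotonically related to the graph of `∂_C f` and suppose
`f y < f x + ⟨x*, y - x⟩`. Pick a slope `r > ⟨x*, x - y⟩` such that `f x` still lies above the line
through `(y, f y)` of slope `r`, and let `c` be the last point of the segment `[y, x]` where `f`
is below that line. Lower semicontinuity keeps `c` below the line, so the Dini derivative of `f` at
`c` towards `x` is at least `r`. By the Subderivative Inequality some Clarke subgradient at a point
near `c` pairs with `x - y` almost that much, while monotone relatedness to `(x, x*)` caps that
pairing at `⟨x*, x - y⟩` up to `ε`: a contradiction. So `x*` is a convex subgradient of `f` at `x`,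
and convex subgradients are Clarke subgradients.
-/

open Filter Topology Set

variable {X : Type*} [NormedAddCommGroup X] [NormedSpace ℝ X]

theorem LowerSemicontinuous.exists_last_le_affine {g : ℝ → EReal} (hg : LowerSemicontinuous g)
    {a r : ℝ} (h0 : g 0 ≤ a) (h1 : ((a + r : ℝ) : EReal) < g 1) :
    ∃ τ ∈ Ico (0 : ℝ) 1, g τ ≤ ((a + τ * r : ℝ) : EReal) ∧
      ∀ t ∈ Ioc τ 1, ((a + t * r : ℝ) : EReal) < g t := by
  set S := Icc (0 : ℝ) 1 ∩ {t | g t ≤ ((a + t * r : ℝ) : EReal)}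
  have hS : IsClosed S := isClosed_Icc.inter <| hg.isClosed_epigraph.preimage <|
    continuous_id.prodMk <| continuous_coe_real_ereal.comp (by fun_prop)
  have h0S : (0 : ℝ) ∈ S := ⟨left_mem_Icc.2 zero_le_one, by simpa using h0⟩
  have hbdd : BddAbove S := ⟨1, fun t ht => ht.1.2⟩
  have hτS : sSup S ∈ S := hS.csSup_mem ⟨0, h0S⟩ hbdd
  have hτ1 : sSup S ≠ 1 := fun h => by
    have h1S : g 1 ≤ ((a + 1 * r : ℝ) : EReal) := h ▸ hτS.2
    rw [one_mul] at h1S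
    exact (h1.trans_le h1S).false
  refine ⟨sSup S, ⟨hτS.1.1, lt_of_le_of_ne hτS.1.2 hτ1⟩, hτS.2, fun t ht => ?_⟩
  by_contra! hle
  exact (le_csSup hbdd ⟨⟨hτS.1.1.trans ht.1.le, ht.2⟩, hle⟩).not_gt ht.1

theorem le_diniSub_of_eventually_le {f : X → EReal} {x d : X} {r : ℝ}
    (h : ∀ᶠ t in 𝓝[>] (0 : ℝ), ((t * r : ℝ) : EReal) ≤ f (x + t • d) - f x) :
    (r : EReal) ≤ diniSub f x d := by
  refine le_liminf_of_le (by isBoundedDefault) ?_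
  filter_upwards [h, self_mem_nhdsWithin] with t ht (htpos : 0 < t)
  rw [EReal.le_div_iff_mul_le (by exact_mod_cast htpos) (EReal.coe_ne_top t), ← EReal.coe_mul,
    mul_comm]
  exact ht

section MonoPolar

variable {f : X → EReal} {x c d : X} {xstar xs : X →L[ℝ] ℝ} {s ε : ℝ}

theorem mul_sub_le_of_mem_monoPolar (hx : (x, xstar) ∈ MonoPolar {p | p.2 ∈ clarkeSub f p.1})
    (hxs : xs ∈ epsEnl f ε c) (hd : x = c + s • d) :
    s * (xs d - xstar d) ≤ ε * (1 + ‖xstar‖) := by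
  obtain ⟨xe, hxe, hnear, -, -, hpair⟩ := hxs
  have hmono : 0 ≤ (xs - xstar) ((xe - c) - s • d) := by
    simpa [hd, sub_add_eq_sub_sub] using hx (xe, xs) hxe
  have hxstar : -(‖xstar‖ * ε) ≤ xstar (xe - c) :=
    (abs_le.1 <| (xstar.le_opNorm _).trans <| by gcongr).1
  rw [map_sub, map_smul, smul_eq_mul] at hmono
  simp only [sub_apply] at hmono
  nlinarith

theorem diniSub_le_of_mem_monoPolar (hx : (x, xstar) ∈ MonoPolar {p | p.2 ∈ clarkeSub f p.1})
    (hdini : ∀ ε > 0,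
      diniSub f c d ≤ sSup ((fun xs : X →L[ℝ] ℝ => ((xs d : ℝ) : EReal)) '' epsEnl f ε c))
    (hs : 0 < s) (hd : x = c + s • d) :
    diniSub f c d ≤ xstar d := by
  refine EReal.le_of_forall_lt_iff_le.1 fun z hz => ?_
  have hη : 0 < z - xstar d := sub_pos.2 (EReal.coe_lt_coe_iff.1 hz)
  refine (hdini _ (by positivity : 0 < (z - xstar d) * s / (1 + ‖xstar‖))).trans <|
    sSup_le ?_
  rintro _ ⟨xs, hxs, rfl⟩
  have hbound := mul_sub_le_of_mem_monoPolar hx hxs hd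
  rw [div_mul_cancel₀ _ (by positivity)] at hbound
  exact EReal.coe_le_coe_iff.2 (by nlinarith)

end MonoPolar

section ConvexSubdifferential

variable {f : X → EReal} {x : X} {xs : X →L[ℝ] ℝ}

theorem coe_le_div_of_mem_cxSub (hxs : xs ∈ cxSub f x) (hfx : f x ≠ ⊤) (hfx' : f x ≠ ⊥)
    (v : X) {t : ℝ} (ht : 0 < t) :
    ((xs v : ℝ) : EReal) ≤ (f (x + t • v) - f x) / t := by
  have hsub := hxs (x + t • v)
  rw [add_sub_cancel_left, map_smul, smul_eq_mul] at hsub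
  rw [EReal.le_div_iff_mul_le (by exact_mod_cast ht) (EReal.coe_ne_top t), ← EReal.coe_mul,
    EReal.le_sub_iff_add_le (Or.inl hfx') (Or.inl hfx), mul_comm]
  exact hsub

theorem cxSub_subset_clarkeSub (hfx : f x ≠ ⊤) (hfx' : f x ≠ ⊥) : cxSub f x ⊆ clarkeSub f x := by
  intro xs hxs d
  refine EReal.ge_of_forall_gt_iff_ge.1 fun z hz => ?_
  have hgap : 0 < xs d - z := sub_pos.2 (EReal.coe_lt_coe_iff.1 hz)
  set δ := (xs d - z) / (‖xs‖ + 1)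
  have hδ : 0 < δ := by positivity
  -- the `limsup` is witnessed along the base point `x` itself
  have hslice : Tendsto (fun t : ℝ => (t, x)) (𝓝[>] 0)
      ((𝓝[>] (0 : ℝ)) ×ˢ (𝓝 x ⊓ Filter.comap f (𝓝 (f x)))) :=
    tendsto_id.prodMk <| tendsto_inf.2 ⟨tendsto_const_nhds, tendsto_comap_iff.2 tendsto_const_nhds⟩
  refine le_trans ?_ (le_iSup _ ⟨δ, hδ⟩)
  refine le_limsup_of_frequently_le' <| hslice.frequently <| Eventually.frequently ?_
  filter_upwards [self_mem_nhdsWithin] with t (ht : 0 < t)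
  refine le_iInf fun ⟨d', hd'⟩ => le_trans ?_ (coe_le_div_of_mem_cxSub hxs hfx hfx' d' ht)
  have hlip : xs d - xs d' ≤ ‖xs‖ * δ := by
    rw [← map_sub]
    exact (le_abs_self _).trans <| (xs.le_opNorm _).trans <| by rw [norm_sub_rev]; gcongr
  have hδN : ‖xs‖ * δ ≤ xs d - z := by
    rw [mul_div_assoc', div_le_iff₀ (by positivity)]
    nlinarith [norm_nonneg xs]
  exact EReal.coe_le_coe_iff.2 (by linarith)

end ConvexSubdifferential

theorem mem_cxSub_of_mem_monoPolar_s16 {f : X → EReal} {x : X} {xstar : X →L[ℝ] ℝ}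
    (hlsc : LowerSemicontinuous f) (hbot : ∀ z, f z ≠ ⊥)
    (hdini : ∀ c, f c ≠ ⊤ → ∀ d : X, ∀ ε > 0,
      diniSub f c d ≤ sSup ((fun xs : X →L[ℝ] ℝ => ((xs d : ℝ) : EReal)) '' epsEnl f ε c))
    (hx : (x, xstar) ∈ MonoPolar {p | p.2 ∈ clarkeSub f p.1}) :
    xstar ∈ cxSub f x := by
  intro y
  by_contra! hlt
  set a := (f y).toReal
  have hfy : f y = a := (EReal.coe_toReal hlt.ne_top (hbot y)).symm
  set d := x - y
  have hshift : ((a + xstar d : ℝ) : EReal) < f x := by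
    have h := EReal.add_lt_add_right_coe (hfy ▸ hlt) (xstar d)
    rwa [show y - x = -d from (neg_sub x y).symm, map_neg, add_right_comm, ← EReal.coe_add,
      ← EReal.coe_add, neg_add_cancel, EReal.coe_zero, zero_add] at h
  obtain ⟨w, hw, hwx⟩ := EReal.exists_between_coe_real hshift
  set r := w - a
  have hr : xstar d < r := by
    have := EReal.coe_lt_coe_iff.1 hw
    linarith
  -- `τ` is the last time the restriction of `f` to `[y, x]` lies below the line of slope `r`
  set g : ℝ → EReal := fun t => f (y + t • d)
  have hg : LowerSemicontinuous g := hlsc.comp (by fun_prop)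
  obtain ⟨τ, ⟨-, hτ1⟩, hgτ, hgafter⟩ := hg.exists_last_le_affine (a := a) (r := r)
    (by simp [g, hfy]) (by simpa [g, d, r] using hwx)
  set c := y + τ • d
  have hdini_ge : (r : EReal) ≤ diniSub f c d := by
    refine le_diniSub_of_eventually_le ?_
    filter_upwards [Ioo_mem_nhdsGT (sub_pos.2 hτ1)] with t ht
    have hct : c + t • d = y + (τ + t) • d := by simp only [c, add_smul, add_assoc]
    have hgt := hgafter (τ + t) ⟨by linarith [ht.1], by linarith [ht.2]⟩
    calc ((t * r : ℝ) : EReal) = ((a + (τ + t) * r : ℝ) : EReal) - ((a + τ * r : ℝ) : EReal) := by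
          rw [← EReal.coe_sub]; ring_nf
      _ ≤ f (c + t • d) - f c := EReal.sub_le_sub (hct ▸ hgt.le) hgτ
  have hdini_le : diniSub f c d ≤ xstar d :=
    diniSub_le_of_mem_monoPolar hx (hdini c (hgτ.trans_lt (EReal.coe_lt_top _)).ne d)
      (sub_pos.2 hτ1) (by simp only [c, d, sub_smul, one_smul, smul_sub]; abel)
  exact hr.not_ge (EReal.coe_le_coe_iff.1 (hdini_ge.trans hdini_le))

theorem clarkeSub_monotone_absorbing_general
    (f : X → EReal) (hlsc : LowerSemicontinuous f)
    (hbot : ∀ z, f z ≠ ⊥) (hproper : ∃ z, f z ≠ ⊤)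
    (hSSI : ∀ xb : X, f xb ≠ ⊤ → ∀ ε : ℝ, 0 < ε →
      (epsEnl f ε xb).Nonempty ∧ ∀ d : X,
        diniSub f xb d ≤ ⨅ ε' : {ε' : ℝ // 0 < ε'},
          sSup ((fun xs : X →L[ℝ] ℝ => ((xs d : ℝ) : EReal)) '' epsEnl f ε'.1 xb)) :
    MonoPolar {p : X × (X →L[ℝ] ℝ) | p.2 ∈ clarkeSub f p.1} ⊆
      {p : X × (X →L[ℝ] ℝ) | p.2 ∈ clarkeSub f p.1} := by
  rintro ⟨x, xstar⟩ hx
  have hcx : xstar ∈ cxSub f x := mem_cxSub_of_mem_monoPolar_s16 hlsc hbot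
    (fun c hc d ε hε =>
      ((hSSI c hc 1 one_pos).2 d).trans (iInf_le _ (⟨ε, hε⟩ : {ε' : ℝ // 0 < ε'}))) hx
  have hfx : f x ≠ ⊤ := fun htop => by
    obtain ⟨z, hz⟩ := hproper
    have hz_top := hcx z
    rw [htop, EReal.coe_add_top] at hz_top
    exact hz (top_le_iff.1 hz_top)
  exact cxSub_subset_clarkeSub hfx (hbot x) hcx

theorem clarkeSub_monotone_absorbing [CompleteSpace X]
    (f : X → EReal) (hlsc : LowerSemicontinuous f)
    (hbot : ∀ z, f z ≠ ⊥) (hproper : ∃ z, f z ≠ ⊤)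
    (hSSI : ∀ xb : X, f xb ≠ ⊤ → ∀ ε : ℝ, 0 < ε →
      (epsEnl f ε xb).Nonempty ∧ ∀ d : X,
        diniSub f xb d ≤ ⨅ ε' : {ε' : ℝ // 0 < ε'},
          sSup ((fun xs : X →L[ℝ] ℝ => ((xs d : ℝ) : EReal)) '' epsEnl f ε'.1 xb)) :
    MonoPolar {p : X × (X →L[ℝ] ℝ) | p.2 ∈ clarkeSub f p.1} ⊆
      {p : X × (X →L[ℝ] ℝ) | p.2 ∈ clarkeSub f p.1} :=
  clarkeSub_monotone_absorbing_general f hlsc hbot hproper hSSI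
end

section
/- Let X be a real Banach space, C ⊆ X convex, x̄ ∈ C, and f : X → ℝ ∪ {+∞} proper lower semicontinuous. If there exist y ∈ C and ȳ ∈ [y, x̄] with f(ȳ) > f(y), then there exists y₀ ∈ C with f′(y₀; x̄ − y₀) > 0, where f′ is the lower Dini subderivative. -/
open Filter Topology Set

variable {X : Type*} [NormedAddCommGroup X] [NormedSpace ℝ X]

/-!
Restrict `f` to the line through `y` and `x̄`, giving a lower semicontinuous `g : ℝ → EReal`
with `g 0 < g b`, where `ȳ` is the point with parameter `b`. Pick an increasing affine `ℓ` with
`g 0 < ℓ 0` and `ℓ b < g b`; lower semicontinuity makes the set where `g ≤ ℓ` closed, so it has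
a last point `t₀ < b`, beyond which `g` increases at least at the slope of `ℓ`. Since
`x̄ - y₀` is a positive multiple of the direction of the line at `y₀ = y + t₀ (x̄ - y)`, the Dini
derivative of `f` at `y₀` in direction `x̄ - y₀` is positive.
-/

open AffineMap

theorem LowerSemicontinuous.isClosed_setOf_le {α γ : Type*} [TopologicalSpace α] [LinearOrder γ]
    [TopologicalSpace γ] [ClosedIciTopology γ] {g h : α → γ} (hg : LowerSemicontinuous g)
    (hh : Continuous h) : IsClosed {x | g x ≤ h x} :=
  hg.isClosed_epigraph.preimage (continuous_id.prodMk hh)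

theorem LowerSemicontinuous.exists_linear_growth_of_lt {g : ℝ → EReal}
    (hg : LowerSemicontinuous g) {a b : ℝ} (hab : a < b) (hlt : g a < g b) :
    ∃ t₀ ∈ Ico a b, ∃ μ : ℝ, 0 < μ ∧
      ∀ t ∈ Ioc t₀ b, ((μ * (t - t₀) : ℝ) : EReal) ≤ g t - g t₀ := by
  obtain ⟨l₁, hl₁, hl₁'⟩ := EReal.exists_between_coe_real hlt
  obtain ⟨l₂, hl₁₂, hl₂⟩ := EReal.exists_between_coe_real hl₁'
  set μ := (l₂ - l₁) / (b - a)
  have hμ : 0 < μ := div_pos (sub_pos.2 (EReal.coe_lt_coe_iff.1 hl₁₂)) (sub_pos.2 hab)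
  let ℓ : ℝ → ℝ := fun t => l₁ + μ * (t - a)
  have hℓb : ℓ b = l₂ := by simp only [ℓ, μ]; field_simp [(sub_pos.2 hab).ne']; ring
  set S := Icc a b ∩ {t | g t ≤ (ℓ t : EReal)}
  have haS : a ∈ S := ⟨left_mem_Icc.2 hab.le, by simpa [ℓ] using hl₁.le⟩
  have hSbdd : BddAbove S := ⟨b, fun t ht => ht.1.2⟩
  have hS : IsClosed S :=
    isClosed_Icc.inter (hg.isClosed_setOf_le (continuous_coe_real_ereal.comp (by fun_prop)))
  obtain ⟨⟨ht₀a, ht₀b⟩, hgt₀⟩ : sSup S ∈ S := hS.csSup_mem ⟨a, haS⟩ hSbdd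
  have ht₀b' : sSup S < b := ht₀b.lt_of_ne fun h => by
    have hgb : g b ≤ (ℓ b : EReal) := h ▸ hgt₀
    exact (hgb.trans_lt (hℓb ▸ hl₂)).false
  refine ⟨sSup S, ⟨ht₀a, ht₀b'⟩, μ, hμ, fun t ⟨ht₀t, htb⟩ => ?_⟩
  have hgt : (ℓ t : EReal) < g t := not_le.1 fun hle =>
    (le_csSup hSbdd ⟨⟨by linarith, htb⟩, hle⟩).not_gt ht₀t
  calc ((μ * (t - sSup S) : ℝ) : EReal) = (ℓ t : EReal) - (ℓ (sSup S) : EReal) := by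
        rw [← EReal.coe_sub]; congr 1; ring
    _ ≤ g t - g (sSup S) := EReal.sub_le_sub hgt.le hgt₀

theorem le_diniSub_of_eventually {f : X → EReal} {x d : X} {c : ℝ}
    (h : ∀ᶠ t : ℝ in 𝓝[>] 0, ((c * t : ℝ) : EReal) ≤ f (x + t • d) - f x) :
    (c : EReal) ≤ diniSub f x d := by
  refine le_liminf_of_le (by isBoundedDefault) ?_
  filter_upwards [h, self_mem_nhdsWithin] with t ht (htpos : 0 < t)
  rwa [EReal.le_div_iff_mul_le (by exact_mod_cast htpos) (EReal.coe_ne_top t), ← EReal.coe_mul]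

theorem lineMap_add_smul_sub_lineMap {R V : Type*} [CommRing R] [AddCommGroup V] [Module R V]
    (y x : V) (s t : R) :
    lineMap y x s + t • (x - lineMap y x s) = lineMap y x (s + t * (1 - s)) := by
  rw [add_comm, ← lineMap_apply_module', lineMap_lineMap_left]; ring_nf

theorem diniSub_lineMap_pos {f : X → EReal} {y x : X} {t₀ b μ : ℝ} (hμ : 0 < μ)
    (ht₀b : t₀ < b) (hb : b ≤ 1)
    (hgrowth : ∀ t ∈ Ioc t₀ b,
      ((μ * (t - t₀) : ℝ) : EReal) ≤ f (lineMap y x t) - f (lineMap y x t₀)) :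
    0 < diniSub f (lineMap y x t₀) (x - lineMap y x t₀) := by
  have ht₀ : 0 < 1 - t₀ := by linarith
  refine lt_of_lt_of_le (EReal.coe_pos.2 (mul_pos hμ ht₀)) (le_diniSub_of_eventually ?_)
  filter_upwards [Ioc_mem_nhdsGT (div_pos (sub_pos.2 ht₀b) ht₀)] with t ⟨ht, htδ⟩
  rw [lineMap_add_smul_sub_lineMap, show μ * (1 - t₀) * t = μ * (t₀ + t * (1 - t₀) - t₀) by ring]
  exact hgrowth _ ⟨by nlinarith, by linarith [(le_div_iff₀ ht₀).1 htδ]⟩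

theorem not_increasing_imp_pos_dini_general
    (f : X → EReal) (hlsc : LowerSemicontinuous f)
    (C : Set X) (hC : Convex ℝ C) (xb : X) (hxb : xb ∈ C)
    (y : X) (hy : y ∈ C) (yb : X) (hyb : yb ∈ segment ℝ y xb)
    (hgt : f y < f yb) :
    ∃ y0 ∈ C, 0 < diniSub f y0 (xb - y0) := by
  rw [segment_eq_image_lineMap] at hyb
  obtain ⟨b, ⟨hb0, hb1⟩, rfl⟩ := hyb
  set g : ℝ → EReal := fun t => f (lineMap y xb t)
  have hg : LowerSemicontinuous g := hlsc.comp lineMap_continuous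
  have hg0b : g 0 < g b := by simpa [g] using hgt
  have hb : 0 < b := hb0.lt_of_ne (by rintro rfl; exact hg0b.ne rfl)
  obtain ⟨t₀, ⟨ht₀, ht₀b⟩, μ, hμ, hgrowth⟩ := hg.exists_linear_growth_of_lt hb hg0b
  exact ⟨lineMap y xb t₀, hC.lineMap_mem hy hxb ⟨ht₀, by linarith⟩,
    diniSub_lineMap_pos hμ ht₀b hb1 hgrowth⟩

theorem not_increasing_imp_pos_dini [CompleteSpace X]
    (f : X → EReal) (hlsc : LowerSemicontinuous f)
    (hbot : ∀ z, f z ≠ ⊥) (hproper : ∃ z, f z ≠ ⊤)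
    (C : Set X) (hC : Convex ℝ C) (xb : X) (hxb : xb ∈ C)
    (y : X) (hy : y ∈ C) (yb : X) (hyb : yb ∈ segment ℝ y xb)
    (hgt : f y < f yb) :
    ∃ y0 ∈ C, 0 < diniSub f y0 (xb - y0) :=
  not_increasing_imp_pos_dini_general f hlsc C hC xb hxb y hy yb hyb hgt
end
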